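/- Fix m < -1 and for each n ∈ ℝ let V(·; n) : [0, ∞) → ℝ be the unique solution of V'' + 3V' = R(V), V(0) = m, V'(0) = n, and let β⁰ = {n : V'(t; n) > 0 and V(t; n) ≤ -1 for all t > 0}. Then β⁰ consists of exactly one point; that is, there is a unique shooting slope n for which the solution is increasing and stays ≤ -1 for all t > 0. -/

import Mathlib

/-!
Write `V(·; n)` for the solution with initial slope `n`. The slopes that overshoot (`V` rises
above `-1`) and those that undershoot (`V'` turns negative while `V < -1`) form two open sets,
open by Gronwall's continuous dependence on `n`. They are disjoint because below `-1` the
quantity `e^{3t} V'` decreases, so an undershooting solution keeps falling; and both are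
nonempty (a steep start overshoots, a start at rest undershoots). A slope in neither set lies in
`β⁰`: at the first time with `V' ≤ 0`, either `V < -1` and the solution undershoots, or `V = -1`
and the solution sits at the rest point `(-1, 0)`, which backward uniqueness forbids.
Connectedness of `ℝ` therefore gives a point of `β⁰`. If `a < b` both lie in `β⁰`, the
comparison principle (`R` is increasing) gives `V'(·; a) < V'(·; b)`, so `V(t; a) ≤ -1 - δ` for
`t ≥ 1` and some `δ > 0`; then `(e^{3t} V')' ≤ e^{3t} R(-1 - δ) < 0` eventually makes `V'(·; a)`
negative.
-/

open Real Filter Set Topology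
open scoped NNReal

lemma monotoneOn_of_hasDerivAt_nonneg {D : Set ℝ} (hD : Convex ℝ D) {f f' : ℝ → ℝ}
    (hf : ∀ x ∈ D, HasDerivAt f (f' x) x) (hf' : ∀ x ∈ interior D, 0 ≤ f' x) :
    MonotoneOn f D :=
  monotoneOn_of_hasDerivWithinAt_nonneg hD
    (fun x hx ↦ (hf x hx).continuousAt.continuousWithinAt)
    (fun x hx ↦ (hf x (interior_subset hx)).hasDerivWithinAt) hf'

lemma antitoneOn_of_hasDerivAt_nonpos {D : Set ℝ} (hD : Convex ℝ D) {f f' : ℝ → ℝ}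
    (hf : ∀ x ∈ D, HasDerivAt f (f' x) x) (hf' : ∀ x ∈ interior D, f' x ≤ 0) :
    AntitoneOn f D :=
  antitoneOn_of_hasDerivWithinAt_nonpos hD
    (fun x hx ↦ (hf x hx).continuousAt.continuousWithinAt)
    (fun x hx ↦ (hf x (interior_subset hx)).hasDerivWithinAt) hf'

lemma strictMonoOn_of_hasDerivAt_pos {D : Set ℝ} (hD : Convex ℝ D) {f f' : ℝ → ℝ}
    (hf : ∀ x ∈ D, HasDerivAt f (f' x) x) (hf' : ∀ x ∈ interior D, 0 < f' x) :
    StrictMonoOn f D :=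
  strictMonoOn_of_hasDerivWithinAt_pos hD
    (fun x hx ↦ (hf x hx).continuousAt.continuousWithinAt)
    (fun x hx ↦ (hf x (interior_subset hx)).hasDerivWithinAt) hf'

lemma HasDerivAt.eventually_nhdsGT_lt {f : ℝ → ℝ} {f' x : ℝ} (hf : HasDerivAt f f' x)
    (hf' : f' < 0) : ∀ᶠ y in 𝓝[>] x, f y < f x := by
  filter_upwards [hf.hasDerivWithinAt.limsup_slope_le' (lt_irrefl x) hf', self_mem_nhdsWithin]
    with y hy hxy
  rw [slope_def_field, div_neg_iff] at hy
  rcases hy with ⟨-, hyx⟩ | ⟨hfy, -⟩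
  · exact absurd hyx (not_lt.2 (sub_pos.2 hxy).le)
  · linarith

lemma exists_first_nonpos {h : ℝ → ℝ} {a b : ℝ} (hh : ContinuousOn h (Icc a b))
    (hab : a ≤ b) (hb : h b ≤ 0) :
    ∃ c ∈ Icc a b, h c ≤ 0 ∧ ∀ s ∈ Ico a c, 0 < h s := by
  have hK : IsCompact (Icc a b ∩ h ⁻¹' Iic 0) :=
    isCompact_Icc.of_isClosed_subset (hh.preimage_isClosed_of_isClosed isClosed_Icc isClosed_Iic)
      inter_subset_left
  obtain ⟨c, ⟨hc, hhc⟩, hmin⟩ := hK.exists_isLeast ⟨b, right_mem_Icc.2 hab, hb⟩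
  exact ⟨c, hc, hhc, fun s hs ↦ lt_of_not_ge fun hs' ↦
    hs.2.not_ge (hmin ⟨⟨hs.1, hs.2.le.trans hc.2⟩, hs'⟩)⟩

lemma hasDerivAt_exp_three_mul (t : ℝ) : HasDerivAt (fun s ↦ exp (3 * s)) (3 * exp (3 * t)) t :=
  (((hasDerivAt_id' t).const_mul 3).exp).congr_deriv (by ring)

def dampedField (R : ℝ → ℝ) (p : ℝ × ℝ) : ℝ × ℝ := (p.2, R p.1 - 3 * p.2)

lemma lipschitzWith_dampedField {R : ℝ → ℝ} {K : ℝ≥0} (hR : LipschitzWith K R) :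
    LipschitzWith (K + 3) (dampedField R) := by
  have h := LipschitzWith.prod_snd.prodMk ((hR.comp LipschitzWith.prod_fst).sub
    ((lipschitzWith_smul (3 : ℝ)).comp LipschitzWith.prod_snd))
  refine h.weaken (max_le ?_ ?_)
  · exact le_add_left (by norm_num)
  · norm_num

def IsDampedSolution (R v : ℝ → ℝ) : Prop :=
  ∀ t, 0 ≤ t → DifferentiableAt ℝ v t ∧ HasDerivAt (deriv v) (R (v t) - 3 * deriv v t) t

namespace IsDampedSolution

variable {R v w : ℝ → ℝ} {a b r t : ℝ}

lemma hasDerivAt (hv : IsDampedSolution R v) (ht : 0 ≤ t) : HasDerivAt v (deriv v t) t :=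
  (hv t ht).1.hasDerivAt

lemma hasDerivAt_deriv (hv : IsDampedSolution R v) (ht : 0 ≤ t) :
    HasDerivAt (deriv v) (R (v t) - 3 * deriv v t) t :=
  (hv t ht).2

lemma continuousOn (hv : IsDampedSolution R v) : ContinuousOn v (Ici 0) :=
  fun _ ht ↦ (hv.hasDerivAt ht).continuousAt.continuousWithinAt

lemma continuousOn_deriv (hv : IsDampedSolution R v) : ContinuousOn (deriv v) (Ici 0) :=
  fun _ ht ↦ (hv.hasDerivAt_deriv ht).continuousAt.continuousWithinAt

lemma hasDerivAt_phase (hv : IsDampedSolution R v) (ht : 0 ≤ t) :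
    HasDerivAt (fun s ↦ (v s, deriv v s)) (dampedField R (v t, deriv v t)) t :=
  (hv.hasDerivAt ht).prodMk (hv.hasDerivAt_deriv ht)

lemma hasDerivAt_exp_mul_deriv (hv : IsDampedSolution R v) (ht : 0 ≤ t) :
    HasDerivAt (fun s ↦ exp (3 * s) * deriv v s) (exp (3 * t) * R (v t)) t :=
  ((hasDerivAt_exp_three_mul t).mul (hv.hasDerivAt_deriv ht)).congr_deriv (by ring)

lemma dist_phase_le {K : ℝ≥0} (hR : LipschitzWith K R) (hv : IsDampedSolution R v)
    (hw : IsDampedSolution R w) (ht : 0 ≤ t) :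
    dist (v t, deriv v t) (w t, deriv w t) ≤
      dist (v 0, deriv v 0) (w 0, deriv w 0) * exp ((K + 3) * t) := by
  have h := dist_le_of_trajectories_ODE (v := fun _ ↦ dampedField R) (a := 0) (b := t)
    (fun _ ↦ lipschitzWith_dampedField hR)
    (fun s hs ↦ (hv.hasDerivAt_phase hs.1).continuousAt.continuousWithinAt)
    (fun s hs ↦ (hv.hasDerivAt_phase hs.1).hasDerivWithinAt)
    (fun s hs ↦ (hw.hasDerivAt_phase hs.1).continuousAt.continuousWithinAt)
    (fun s hs ↦ (hw.hasDerivAt_phase hs.1).hasDerivWithinAt) le_rfl t ⟨ht, le_rfl⟩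
  simpa using h

lemma apply_zero_eq_of_rest {K : ℝ≥0} {c : ℝ} (hR : LipschitzWith K R) (hc : R c = 0)
    (hv : IsDampedSolution R v) (ht : 0 ≤ t) (hvt : v t = c) (hv't : deriv v t = 0) :
    v 0 = c := by
  have hrest : dampedField R (c, 0) = 0 := by simp [dampedField, hc]
  have h := ODE_solution_unique_of_mem_Icc_left (v := fun _ ↦ dampedField R) (s := fun _ ↦ univ)
    (g := fun _ ↦ (c, 0)) (a := 0) (b := t)
    (fun _ _ ↦ (lipschitzWith_dampedField hR).lipschitzOnWith)
    (fun s hs ↦ (hv.hasDerivAt_phase hs.1).continuousAt.continuousWithinAt)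
    (fun s hs ↦ (hv.hasDerivAt_phase hs.1.le).hasDerivWithinAt) (fun _ _ ↦ trivial)
    continuousOn_const (fun _ _ ↦ hrest ▸ hasDerivWithinAt_const _ _ _) (fun _ _ ↦ trivial)
    (by simp [hvt, hv't]) ⟨le_rfl, ht⟩
  exact congrArg Prod.fst h

lemma exp_mul_deriv_le (hv : IsDampedSolution R v) (ha : 0 ≤ a) (hab : a ≤ b)
    (hr : ∀ t ∈ Ioo a b, R (v t) ≤ r) :
    exp (3 * b) * deriv v b ≤ exp (3 * a) * deriv v a + r / 3 * (exp (3 * b) - exp (3 * a)) := by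
  have h : MonotoneOn (fun s ↦ r / 3 * exp (3 * s) - exp (3 * s) * deriv v s) (Icc a b) :=
    monotoneOn_of_hasDerivAt_nonneg (f' := fun s ↦ exp (3 * s) * (r - R (v s))) (convex_Icc a b)
      (fun s hs ↦ (((hasDerivAt_exp_three_mul s).const_mul (r / 3)).sub
        (hv.hasDerivAt_exp_mul_deriv (ha.trans hs.1))).congr_deriv (by ring))
      (fun s hs ↦ by
        rw [interior_Icc] at hs
        exact mul_nonneg (exp_pos _).le (sub_nonneg.2 (hr s hs)))
  linarith [h (left_mem_Icc.2 hab) (right_mem_Icc.2 hab) hab]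

lemma le_exp_mul_deriv (hv : IsDampedSolution R v) (ha : 0 ≤ a) (hab : a ≤ b)
    (hr : ∀ t ∈ Ioo a b, r ≤ R (v t)) :
    exp (3 * a) * deriv v a + r / 3 * (exp (3 * b) - exp (3 * a)) ≤ exp (3 * b) * deriv v b := by
  have h : MonotoneOn (fun s ↦ exp (3 * s) * deriv v s - r / 3 * exp (3 * s)) (Icc a b) :=
    monotoneOn_of_hasDerivAt_nonneg (f' := fun s ↦ exp (3 * s) * (R (v s) - r)) (convex_Icc a b)
      (fun s hs ↦ ((hv.hasDerivAt_exp_mul_deriv (ha.trans hs.1)).sub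
        ((hasDerivAt_exp_three_mul s).const_mul (r / 3))).congr_deriv (by ring))
      (fun s hs ↦ by
        rw [interior_Icc] at hs
        exact mul_nonneg (exp_pos _).le (sub_nonneg.2 (hr s hs)))
  linarith [h (left_mem_Icc.2 hab) (right_mem_Icc.2 hab) hab]

lemma lt_neg_one_of_deriv_neg (hneg : ∀ x < -1, R x < 0) (hv : IsDampedSolution R v)
    (ha : 0 ≤ a) (hva : v a < -1) (hd : deriv v a < 0) (ht : a ≤ t) : v t < -1 := by
  by_contra! hvt
  have hcont : ContinuousOn (fun s ↦ -1 - v s) (Icc a t) :=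
    (continuousOn_const.sub hv.continuousOn).mono (Icc_subset_Ici_self.trans (Ici_subset_Ici.2 ha))
  obtain ⟨u, hu, hvu, hbelow⟩ := exists_first_nonpos hcont ht (by linarith)
  have hderiv : ∀ s ∈ Ico a u, deriv v s < 0 := fun s hs ↦ by
    have h := hv.exp_mul_deriv_le (r := 0) ha hs.1
      (fun x hx ↦ (hneg _ (by linarith [hbelow x ⟨hx.1.le, hx.2.trans hs.2⟩])).le)
    rw [zero_div, zero_mul, add_zero] at h
    exact neg_of_mul_neg_right (h.trans_lt (mul_neg_of_pos_of_neg (exp_pos _) hd)) (exp_pos _).le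
  have hanti : AntitoneOn v (Icc a u) :=
    antitoneOn_of_hasDerivAt_nonpos (convex_Icc a u) (fun s hs ↦ hv.hasDerivAt (ha.trans hs.1))
      (fun s hs ↦ by
        rw [interior_Icc] at hs
        exact (hderiv s ⟨hs.1.le, hs.2⟩).le)
  linarith [hanti (left_mem_Icc.2 hu.1) (right_mem_Icc.2 hu.1) hu.1]

lemma exists_undershoot_of_lt (hneg : ∀ x < -1, R x < 0) (hv : IsDampedSolution R v)
    (ht : 0 ≤ t) (hvt : v t < -1) (hd : deriv v t ≤ 0) :
    ∃ τ > t, deriv v τ < 0 ∧ ∀ s ∈ Icc t τ, v s < -1 := by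
  have hE : ∀ᶠ s in 𝓝[>] t, exp (3 * s) * deriv v s < exp (3 * t) * deriv v t :=
    (hv.hasDerivAt_exp_mul_deriv ht).eventually_nhdsGT_lt
      (mul_neg_of_pos_of_neg (exp_pos _) (hneg _ hvt))
  obtain ⟨u, htu, hu⟩ := exists_Ico_subset_of_mem_nhds
    ((hv.hasDerivAt ht).continuousAt.preimage_mem_nhds (Iio_mem_nhds hvt)) ⟨t + 1, by linarith⟩
  obtain ⟨τ, hEτ, hτ⟩ := (hE.and (Ioo_mem_nhdsGT htu)).exists
  refine ⟨τ, hτ.1, ?_, fun s hs ↦ hu ⟨hs.1, hs.2.trans_lt hτ.2⟩⟩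
  exact neg_of_mul_neg_right
    (hEτ.trans_le (mul_nonpos_of_nonneg_of_nonpos (exp_pos _).le hd)) (exp_pos _).le

lemma exists_undershoot {K : ℝ≥0} (hR : LipschitzWith K R) (hzero : R (-1) = 0)
    (hneg : ∀ x < -1, R x < 0) (hv : IsDampedSolution R v) (h0 : v 0 < -1)
    (hle : ∀ t ≥ 0, v t ≤ -1) (ht : 0 ≤ t) (hd : deriv v t ≤ 0) :
    ∃ τ > 0, deriv v τ < 0 ∧ ∀ s ∈ Icc 0 τ, v s < -1 := by
  obtain ⟨t₁, ht₁, hd₁, hpos⟩ :=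
    exists_first_nonpos (hv.continuousOn_deriv.mono Icc_subset_Ici_self) ht hd
  have hmono : MonotoneOn v (Icc 0 t₁) :=
    monotoneOn_of_hasDerivAt_nonneg (convex_Icc 0 t₁) (fun s hs ↦ hv.hasDerivAt hs.1)
      (fun s hs ↦ by
        rw [interior_Icc] at hs
        exact (hpos s ⟨hs.1.le, hs.2⟩).le)
  rcases (hle t₁ ht₁.1).lt_or_eq with hlt | heq
  · obtain ⟨τ, hτ, hdτ, hvτ⟩ := hv.exists_undershoot_of_lt hneg ht₁.1 hlt hd₁
    refine ⟨τ, ht₁.1.trans_lt hτ, hdτ, fun s hs ↦ ?_⟩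
    rcases le_total s t₁ with hst | hst
    · exact (hmono ⟨hs.1, hst⟩ ⟨ht₁.1, le_rfl⟩ hst).trans_lt hlt
    · exact hvτ s ⟨hst, hs.2⟩
  · -- `v` touches `-1` from below at `t₁ > 0`, so `(v, v')` is at the rest point `(-1, 0)`.
    have ht₁pos : 0 < t₁ := ht₁.1.lt_of_ne (by rintro rfl; linarith)
    have hmax : IsLocalMax v t₁ := by
      filter_upwards [Ioi_mem_nhds ht₁pos] with s hs
      exact heq ▸ hle s (le_of_lt hs)
    linarith [hv.apply_zero_eq_of_rest hR hzero ht₁.1 heq hmax.deriv_eq_zero]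

lemma deriv_lt_deriv (hmono : Monotone R) (hv : IsDampedSolution R v)
    (hw : IsDampedSolution R w) (h0 : v 0 ≤ w 0) (h0' : deriv v 0 < deriv w 0) (ht : 0 ≤ t) :
    deriv v t < deriv w t := by
  by_contra! h
  have hcont : ContinuousOn (fun s ↦ deriv w s - deriv v s) (Icc 0 t) :=
    (hw.continuousOn_deriv.sub hv.continuousOn_deriv).mono Icc_subset_Ici_self
  obtain ⟨t₁, ht₁, hd₁, hpos⟩ := exists_first_nonpos hcont ht (sub_nonpos.2 h)
  have hgap : MonotoneOn (fun s ↦ w s - v s) (Icc 0 t₁) :=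
    monotoneOn_of_hasDerivAt_nonneg (convex_Icc 0 t₁)
      (fun s hs ↦ (hw.hasDerivAt hs.1).sub (hv.hasDerivAt hs.1))
      (fun s hs ↦ by
        rw [interior_Icc] at hs
        exact (hpos s ⟨hs.1.le, hs.2⟩).le)
  have hE : MonotoneOn (fun s ↦ exp (3 * s) * deriv w s - exp (3 * s) * deriv v s) (Icc 0 t₁) :=
    monotoneOn_of_hasDerivAt_nonneg (convex_Icc 0 t₁)
      (fun s hs ↦ (hw.hasDerivAt_exp_mul_deriv hs.1).sub (hv.hasDerivAt_exp_mul_deriv hs.1))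
      (fun s hs ↦ by
        rw [interior_Icc] at hs
        have hvw := hgap (left_mem_Icc.2 ht₁.1) ⟨hs.1.le, hs.2.le⟩ hs.1.le
        rw [← mul_sub]
        exact mul_nonneg (exp_pos _).le (sub_nonneg.2 (hmono (by linarith))))
  have := hE (left_mem_Icc.2 ht₁.1) (right_mem_Icc.2 ht₁.1) ht₁.1
  simp only [mul_zero, exp_zero, one_mul] at this hd₁
  nlinarith [exp_pos (3 * t₁)]

lemma exists_deriv_nonpos_of_le {c : ℝ} (hmono : Monotone R) (hv : IsDampedSolution R v)
    (ha : 0 ≤ a) (hc : R c < 0) (hle : ∀ t ≥ a, v t ≤ c) :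
    ∃ t ≥ a, deriv v t ≤ 0 := by
  have hexp : Tendsto (fun t ↦ exp (3 * t)) atTop atTop :=
    tendsto_exp_atTop.comp (tendsto_id.const_mul_atTop three_pos)
  obtain ⟨t, ht, hat⟩ := ((hexp.eventually_ge_atTop
    (3 * (exp (3 * a) * deriv v a - R c / 3 * exp (3 * a)) / -R c)).and
      (eventually_ge_atTop a)).exists
  rw [div_le_iff₀ (neg_pos.2 hc)] at ht
  refine ⟨t, hat, nonpos_of_mul_nonpos_right ?_ (exp_pos (3 * t))⟩
  linarith [hv.exp_mul_deriv_le ha hat (fun s hs ↦ hmono (hle s hs.1.le))]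

lemma exists_deriv_nonpos_of_deriv_lt (hmono : Monotone R) (hneg : ∀ x < -1, R x < 0)
    (hv : IsDampedSolution R v) (hw : IsDampedSolution R w) (h0 : v 0 = w 0)
    (h0' : deriv v 0 < deriv w 0) (hw_le : ∀ t > 0, w t ≤ -1) : ∃ t > 0, deriv v t ≤ 0 := by
  have hgap : StrictMonoOn (fun t ↦ w t - v t) (Ici 0) :=
    strictMonoOn_of_hasDerivAt_pos (convex_Ici 0)
      (fun t ht ↦ (hw.hasDerivAt ht).sub (hv.hasDerivAt ht))
      (fun t ht ↦ sub_pos.2 (hv.deriv_lt_deriv hmono hw h0.le h0' (interior_subset ht)))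
  have hd : 0 < w 1 - v 1 := by
    have := hgap self_mem_Ici (mem_Ici.2 zero_le_one) zero_lt_one
    simp only [h0, sub_self] at this
    exact this
  obtain ⟨t, ht, hdt⟩ := hv.exists_deriv_nonpos_of_le hmono zero_le_one
    (hneg (-1 - (w 1 - v 1)) (by linarith)) (fun t ht ↦ by
      have := hgap.monotoneOn (mem_Ici.2 zero_le_one) (mem_Ici.2 (zero_le_one.trans ht)) ht
      linarith [hw_le t (zero_lt_one.trans_le ht)])
  exact ⟨t, zero_lt_one.trans_le ht, hdt⟩

lemma exists_gt_neg_one (hv : IsDampedSolution R v) (hr : r ≤ 0) (hrR : ∀ x ≤ -1, r ≤ R x)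
    (h0' : exp 3 * (|v 0| - r / 3) ≤ deriv v 0) : ∃ t ≥ 0, -1 < v t := by
  by_contra! hle
  have hd : ∀ t ∈ Ioo (0 : ℝ) 1, |v 0| ≤ deriv v t := fun t ht ↦ by
    have h := hv.le_exp_mul_deriv le_rfl ht.1.le (fun s hs ↦ hrR _ (hle s hs.1.le))
    have h3 : exp (3 * t) ≤ exp 3 := exp_le_exp.2 (by linarith [ht.2])
    simp only [mul_zero, exp_zero, one_mul] at h
    refine le_of_mul_le_mul_left ?_ (exp_pos (3 * t))
    nlinarith [abs_nonneg (v 0)]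
  obtain ⟨ξ, hξ, hslope⟩ := exists_hasDerivAt_eq_slope v (deriv v) zero_lt_one
    (hv.continuousOn.mono Icc_subset_Ici_self) (fun t ht ↦ hv.hasDerivAt ht.1.le)
  rw [sub_zero, div_one] at hslope
  linarith [hd ξ hξ, hle 1 zero_le_one, neg_abs_le (v 0)]

end IsDampedSolution

structure IsShootingFamily (R : ℝ → ℝ) (m : ℝ) (V : ℝ → ℝ → ℝ) : Prop where
  isDampedSolution : ∀ n, IsDampedSolution R (V n)
  apply_zero : ∀ n, V n 0 = m
  deriv_apply_zero : ∀ n, deriv (V n) 0 = n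

def shootingSet (V : ℝ → ℝ → ℝ) : Set ℝ :=
  {n | ∀ t > 0, 0 < deriv (V n) t ∧ V n t ≤ -1}

def overshootSet (V : ℝ → ℝ → ℝ) : Set ℝ := {n | ∃ t ≥ 0, -1 < V n t}

def undershootSet (V : ℝ → ℝ → ℝ) : Set ℝ :=
  {n | ∃ τ > 0, deriv (V n) τ < 0 ∧ ∀ s ∈ Icc 0 τ, V n s < -1}

namespace IsShootingFamily

variable {R : ℝ → ℝ} {m : ℝ} {V : ℝ → ℝ → ℝ} {K : ℝ≥0}

lemma eventually_dist_lt (hV : IsShootingFamily R m V) (hR : LipschitzWith K R) (n₀ τ : ℝ)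
    {ε : ℝ} (hε : 0 < ε) :
    ∀ᶠ n in 𝓝 n₀, ∀ s ∈ Icc 0 τ,
      dist (V n s) (V n₀ s) < ε ∧ dist (deriv (V n) s) (deriv (V n₀) s) < ε := by
  filter_upwards [Metric.ball_mem_nhds n₀ (div_pos hε (exp_pos ((K + 3) * τ)))] with n hn s hs
  have h : dist (V n s, deriv (V n) s) (V n₀ s, deriv (V n₀) s) < ε := calc
    _ ≤ dist (V n 0, deriv (V n) 0) (V n₀ 0, deriv (V n₀) 0) * exp ((K + 3) * s) :=
      (hV.isDampedSolution n).dist_phase_le hR (hV.isDampedSolution n₀) hs.1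
    _ = dist n n₀ * exp ((K + 3) * s) := by
      simp [Prod.dist_eq, hV.apply_zero, hV.deriv_apply_zero]
    _ ≤ dist n n₀ * exp ((K + 3) * τ) := by gcongr; exact hs.2
    _ < ε / exp ((K + 3) * τ) * exp ((K + 3) * τ) := by gcongr; exact hn
    _ = ε := div_mul_cancel₀ _ (exp_pos _).ne'
  rw [Prod.dist_eq] at h
  exact max_lt_iff.1 h

lemma isOpen_overshootSet (hV : IsShootingFamily R m V) (hR : LipschitzWith K R) :
    IsOpen (overshootSet V) := by
  refine isOpen_iff_mem_nhds.2 fun n₀ ⟨t, ht, hvt⟩ ↦ ?_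
  filter_upwards [hV.eventually_dist_lt hR n₀ t (by linarith : 0 < V n₀ t + 1)] with n hn
  have hclose := (hn t ⟨ht, le_rfl⟩).1
  rw [Real.dist_eq] at hclose
  exact ⟨t, ht, by linarith [neg_abs_le (V n t - V n₀ t)]⟩

lemma isOpen_undershootSet (hV : IsShootingFamily R m V) (hR : LipschitzWith K R) :
    IsOpen (undershootSet V) := by
  refine isOpen_iff_mem_nhds.2 fun n₀ ⟨τ, hτ, hd, hvτ⟩ ↦ ?_
  obtain ⟨s₀, hs₀, hmax⟩ := isCompact_Icc.exists_isMaxOn (nonempty_Icc.2 hτ.le)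
    ((hV.isDampedSolution n₀).continuousOn.mono Icc_subset_Ici_self)
  have hgap : 0 < min (-1 - V n₀ s₀) (-deriv (V n₀) τ) :=
    lt_min (by linarith [hvτ s₀ hs₀]) (by linarith)
  filter_upwards [hV.eventually_dist_lt hR n₀ τ hgap] with n hn
  refine ⟨τ, hτ, ?_, fun s hs ↦ ?_⟩
  · have hclose := (hn τ ⟨hτ.le, le_rfl⟩).2
    rw [Real.dist_eq, lt_min_iff] at hclose
    linarith [hclose.2, le_abs_self (deriv (V n) τ - deriv (V n₀) τ)]
  · have hclose := (hn s hs).1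
    have hle : V n₀ s ≤ V n₀ s₀ := hmax hs
    rw [Real.dist_eq, lt_min_iff] at hclose
    linarith [hclose.1, le_abs_self (V n s - V n₀ s)]

lemma overshootSet_nonempty (hV : IsShootingFamily R m V) (hbdd : BddBelow (R '' Iic (-1))) :
    (overshootSet V).Nonempty := by
  obtain ⟨b, hb⟩ := hbdd
  refine ⟨exp 3 * (|m| - min b 0 / 3),
    (hV.isDampedSolution _).exists_gt_neg_one (min_le_right b 0)
    (fun x hx ↦ (min_le_left b 0).trans (hb ⟨x, hx, rfl⟩)) ?_⟩
  rw [hV.apply_zero, hV.deriv_apply_zero]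

lemma zero_mem_undershootSet (hV : IsShootingFamily R m V) (hneg : ∀ x < -1, R x < 0)
    (hm : m < -1) : 0 ∈ undershootSet V :=
  (hV.isDampedSolution 0).exists_undershoot_of_lt hneg le_rfl (hV.apply_zero 0 ▸ hm)
    (hV.deriv_apply_zero 0).le

lemma disjoint_overshootSet_undershootSet (hV : IsShootingFamily R m V)
    (hneg : ∀ x < -1, R x < 0) : Disjoint (overshootSet V) (undershootSet V) := by
  refine disjoint_left.2 fun n ⟨t, ht, hvt⟩ ⟨τ, hτ, hd, hvτ⟩ ↦ hvt.not_ge ?_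
  rcases le_total t τ with htτ | hτt
  · exact (hvτ t ⟨ht, htτ⟩).le
  · exact ((hV.isDampedSolution n).lt_neg_one_of_deriv_neg hneg hτ.le
      (hvτ τ ⟨hτ.le, le_rfl⟩) hd hτt).le

lemma mem_shootingSet_of_notMem (hV : IsShootingFamily R m V) (hR : LipschitzWith K R)
    (hzero : R (-1) = 0) (hneg : ∀ x < -1, R x < 0) (hm : m < -1) {n : ℝ}
    (hover : n ∉ overshootSet V) (hunder : n ∉ undershootSet V) : n ∈ shootingSet V := by
  have hle : ∀ t ≥ 0, V n t ≤ -1 := fun t ht ↦ not_lt.1 fun h ↦ hover ⟨t, ht, h⟩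
  refine fun t ht ↦ ⟨not_le.1 fun hd ↦ hunder ?_, hle t ht.le⟩
  exact (hV.isDampedSolution n).exists_undershoot hR hzero hneg (hV.apply_zero n ▸ hm) hle ht.le
    hd

lemma shootingSet_nonempty (hV : IsShootingFamily R m V) (hR : LipschitzWith K R)
    (hzero : R (-1) = 0) (hneg : ∀ x < -1, R x < 0) (hbdd : BddBelow (R '' Iic (-1)))
    (hm : m < -1) : (shootingSet V).Nonempty := by
  by_contra hempty
  have hcover : univ ⊆ overshootSet V ∪ undershootSet V := fun n _ ↦ by
    by_contra hn
    rw [mem_union, not_or] at hn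
    exact hempty ⟨n, hV.mem_shootingSet_of_notMem hR hzero hneg hm hn.1 hn.2⟩
  obtain ⟨n, -, hover, hunder⟩ := isPreconnected_univ _ _ (hV.isOpen_overshootSet hR)
    (hV.isOpen_undershootSet hR) hcover (by simpa using hV.overshootSet_nonempty hbdd)
    ⟨0, trivial, hV.zero_mem_undershootSet hneg hm⟩
  exact disjoint_left.1 (hV.disjoint_overshootSet_undershootSet hneg) hover hunder

lemma shootingSet_subsingleton (hV : IsShootingFamily R m V) (hmono : Monotone R)
    (hneg : ∀ x < -1, R x < 0) : (shootingSet V).Subsingleton := by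
  have key : ∀ a ∈ shootingSet V, ∀ b ∈ shootingSet V, ¬ a < b := fun a ha b hb hab ↦ by
    obtain ⟨t, ht, hdt⟩ := (hV.isDampedSolution a).exists_deriv_nonpos_of_deriv_lt hmono hneg
      (hV.isDampedSolution b) (by rw [hV.apply_zero, hV.apply_zero])
      (by rwa [hV.deriv_apply_zero, hV.deriv_apply_zero]) fun t ht ↦ (hb t ht).2
    exact (ha t ht).1.not_ge hdt
  exact fun a ha b hb ↦ le_antisymm (not_lt.1 (key b hb a ha)) (not_lt.1 (key a ha b hb))

end IsShootingFamily

lemma strictMonoOn_sub_exp : StrictMonoOn (fun y : ℝ ↦ y - exp y) (Iic 0) :=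
  strictMonoOn_of_hasDerivAt_pos (convex_Iic 0)
    (fun y _ ↦ (hasDerivAt_id' y).sub (hasDerivAt_exp y))
    (fun y hy ↦ by
      rw [interior_Iic] at hy
      simpa using exp_lt_one_iff.2 hy)

-- For `y = Q v < 0` this is `(4 v - R v) / 2`, so its monotonicity bounds the slopes of `R` by `4`.
lemma monotone_two_mul_sub_exp_add_one_sub_exp_sq :
    Monotone fun y : ℝ ↦ 2 * (y - exp y) + (1 - exp y) ^ 2 := by
  refine monotone_of_hasDerivAt_nonneg (f' := fun y ↦ 2 * (1 - exp y) ^ 2) (fun y ↦ ?_)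
    (fun y ↦ by positivity)
  refine ((((hasDerivAt_id' y).sub (hasDerivAt_exp y)).const_mul 2).add
    (((hasDerivAt_exp y).const_sub 1).pow 2)).congr_deriv ?_
  push_cast
  ring

section Nonlinearity

variable {Q R : ℝ → ℝ}

lemma monotoneOn_Q (hQ : ∀ v, v < -1 → Q v < 0 ∧ Q v - exp (Q v) = v) :
    MonotoneOn Q (Iio (-1)) := fun v₁ h₁ v₂ h₂ h ↦ by
  rw [← strictMonoOn_sub_exp.le_iff_le (hQ v₁ h₁).1.le (hQ v₂ h₂).1.le]
  show Q v₁ - exp (Q v₁) ≤ Q v₂ - exp (Q v₂)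
  rwa [(hQ v₁ h₁).2, (hQ v₂ h₂).2]

lemma R_neg_one_eq_zero
    (hR : ∀ v, R v = if v < -1 then -2 * (1 - exp (Q v)) ^ 2 else 4 * (v + 1)) : R (-1) = 0 := by
  simp [hR]

variable (hQ : ∀ v, v < -1 → Q v < 0 ∧ Q v - exp (Q v) = v)
  (hR : ∀ v, R v = if v < -1 then -2 * (1 - exp (Q v)) ^ 2 else 4 * (v + 1))
include hQ hR

lemma R_neg {v : ℝ} (hv : v < -1) : R v < 0 := by
  rw [hR, if_pos hv]
  have := exp_lt_one_iff.2 (hQ v hv).1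
  nlinarith

lemma monotone_R : Monotone R := by
  intro v₁ v₂ h
  by_cases h₂ : v₂ < -1
  · have h₁ : v₁ < -1 := h.trans_lt h₂
    rw [hR, if_pos h₁, hR, if_pos h₂]
    have hQ₁₂ := exp_le_exp.2 (monotoneOn_Q hQ h₁ h₂ h)
    have := exp_lt_one_iff.2 (hQ v₂ h₂).1
    nlinarith
  · rw [hR v₂, if_neg h₂]
    by_cases h₁ : v₁ < -1
    · linarith [R_neg hQ hR h₁]
    · rw [hR, if_neg h₁]
      linarith

lemma monotone_four_mul_sub_R : Monotone fun v ↦ 4 * v - R v := by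
  have key : ∀ v < -1, 4 * v - R v = 2 * (2 * (Q v - exp (Q v)) + (1 - exp (Q v)) ^ 2) := by
    intro v hv
    rw [hR, if_pos hv, (hQ v hv).2]
    ring
  have hge : ∀ v, ¬ v < -1 → 4 * v - R v = -4 := by
    intro v hv
    rw [hR, if_neg hv]
    ring
  intro v₁ v₂ h
  show 4 * v₁ - R v₁ ≤ 4 * v₂ - R v₂
  by_cases h₁ : v₁ < -1
  · rw [key v₁ h₁]
    by_cases h₂ : v₂ < -1
    · rw [key v₂ h₂]
      linarith [monotone_two_mul_sub_exp_add_one_sub_exp_sq (monotoneOn_Q hQ h₁ h₂ h)]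
    · have h0 := monotone_two_mul_sub_exp_add_one_sub_exp_sq (hQ v₁ h₁).1.le
      simp only [exp_zero] at h0
      linarith [hge v₂ h₂]
  · rw [hge v₁ h₁, hge v₂ (fun h₂ ↦ h₁ (h.trans_lt h₂))]

lemma lipschitzWith_R : LipschitzWith 4 R := by
  refine LipschitzWith.of_le_add_mul 4 fun x y ↦ ?_
  rcases le_total x y with h | h
  · push_cast
    linarith [monotone_R hQ hR h, dist_nonneg (x := x) (y := y)]
  · have : 4 * y - R y ≤ 4 * x - R x := monotone_four_mul_sub_R hQ hR h
    rw [Real.dist_eq, abs_of_nonneg (sub_nonneg.2 h)]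
    push_cast
    linarith

lemma bddBelow_R_image : BddBelow (R '' Iic (-1)) := by
  refine ⟨-2, ?_⟩
  rintro _ ⟨v, hv, rfl⟩
  by_cases h : v < -1
  · rw [hR, if_pos h]
    have := exp_lt_one_iff.2 (hQ v h).1
    nlinarith [exp_pos (Q v)]
  · rw [hR, if_neg h]
    linarith

end Nonlinearity

/-- For fixed `m < -1` and the shooting family `V(·; n)` solving
`V'' + 3V' = R(V)`, `V(0) = m`, `V'(0) = n`, the set
`β⁰ = {n : ∀ t > 0, V'(t;n) > 0 ∧ V(t;n) ≤ -1}` is a single point set: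
the correct shooting datum is unique. -/
theorem shooting_set_zero_singleton
    (Q R : ℝ → ℝ)
    (hQ : ∀ v : ℝ, v < -1 → Q v < 0 ∧ Q v - Real.exp (Q v) = v)
    (hR : ∀ v : ℝ, R v = if v < -1 then -2 * (1 - Real.exp (Q v)) ^ 2 else 4 * (v + 1))
    (m : ℝ) (hm : m < -1)
    (V : ℝ → ℝ → ℝ)
    (hdiff : ∀ n : ℝ, ∀ t : ℝ, 0 ≤ t →
      DifferentiableAt ℝ (V n) t ∧ DifferentiableAt ℝ (deriv (V n)) t)
    (hode : ∀ n : ℝ, ∀ t : ℝ, 0 ≤ t →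
      deriv (deriv (V n)) t + 3 * deriv (V n) t = R (V n t))
    (hic : ∀ n : ℝ, V n 0 = m ∧ deriv (V n) 0 = n)
    (B0 : Set ℝ)
    (hB0 : B0 = {n : ℝ | ∀ t > 0, 0 < deriv (V n) t ∧ V n t ≤ -1}) :
    ∃! n : ℝ, n ∈ B0 := by
  subst hB0
  have hV : IsShootingFamily R m V :=
    ⟨fun n t ht ↦ ⟨(hdiff n t ht).1,
      (hdiff n t ht).2.hasDerivAt.congr_deriv (by linarith [hode n t ht])⟩,
      fun n ↦ (hic n).1, fun n ↦ (hic n).2⟩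
  have hneg : ∀ v < -1, R v < 0 := fun _ ↦ R_neg hQ hR
  obtain ⟨n, hn⟩ := hV.shootingSet_nonempty (lipschitzWith_R hQ hR) (R_neg_one_eq_zero hR) hneg
    (bddBelow_R_image hQ hR) hm
  exact ⟨n, hn, fun n' hn' ↦ hV.shootingSet_subsingleton (monotone_R hQ hR) hneg hn' hn⟩
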